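/- Negation distributes over the sequential compound: for all short partizan games G and H, -(G → H) is identical to (-G) → (-H). -/

import Mathlib

universe u

namespace SetTheory

/-- Pre-games, as in Mathlib's former `SetTheory.PGame` (removed from Mathlib). -/
inductive PGame : Type (u + 1)
  | mk : ∀ α β : Type u, (α → PGame) → (β → PGame) → PGame

namespace PGame

def LeftMoves : PGame → Type u
  | mk l _ _ _ => l

def RightMoves : PGame → Type u
  | mk _ r _ _ => r

def moveLeft : ∀ g : PGame, LeftMoves g → PGame
  | mk _l _ L _ => L

def moveRight : ∀ g : PGame, RightMoves g → PGame
  | mk _ _r _ R => R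

instance : Zero PGame := ⟨⟨PEmpty, PEmpty, PEmpty.elim, PEmpty.elim⟩⟩

def Identical : PGame.{u} → PGame.{u} → Prop
  | mk _ _ xL xR, mk _ _ yL yR =>
    Relator.BiTotal (fun i j ↦ Identical (xL i) (yL j)) ∧
      Relator.BiTotal (fun i j ↦ Identical (xR i) (yR j))

infix:50 " ≡ " => PGame.Identical

def neg : PGame → PGame
  | ⟨l, r, L, R⟩ => ⟨r, l, fun i => neg (R i), fun i => neg (L i)⟩

instance : Neg PGame := ⟨neg⟩

/-- Inner recursion (on `y`) of the disjunctive sum `x + y`, `x = mk xl xr xL xR`,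
given the sums `fL i = xL i + ·` and `fR i = xR i + ·`. -/
def addAux (xl xr : Type u) (fL : xl → PGame.{u} → PGame.{u}) (fR : xr → PGame.{u} → PGame.{u}) :
    PGame.{u} → PGame.{u}
  | mk yl yr yL yR =>
    mk (xl ⊕ yl) (xr ⊕ yr)
      (Sum.elim (fun i => fL i (mk yl yr yL yR)) (fun j => addAux xl xr fL fR (yL j)))
      (Sum.elim (fun i => fR i (mk yl yr yL yR)) (fun j => addAux xl xr fL fR (yR j)))

/-- The disjunctive sum of pregames (same recursion as Mathlib's former `PGame` addition). -/
def add : PGame.{u} → PGame.{u} → PGame.{u}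
  | mk xl xr xL xR => addAux xl xr (fun i => add (xL i)) (fun i => add (xR i))

instance : Add PGame.{u} := ⟨add⟩

instance : Sub PGame := ⟨fun x y => x + -y⟩

def star : PGame.{u} :=
  ⟨PUnit, PUnit, fun _ => 0, fun _ => 0⟩

class inductive Short : PGame.{u} → Type (u + 1)
  | mk :
    ∀ {α β : Type u} {L : α → PGame.{u}} {R : β → PGame.{u}} (_ : ∀ i : α, Short (L i))
      (_ : ∀ j : β, Short (R j)) [Fintype α] [Fintype β], Short ⟨α, β, L, R⟩

end PGame

end SetTheory

open SetTheory

open scoped PGame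

namespace SeqCompound

open Classical in
/-- The sequential compound `G → H` of two pregames. -/
noncomputable def seqc : PGame → PGame → PGame
  | PGame.mk α β L R, H =>
    if Nonempty α then
      if Nonempty β then
        PGame.mk α β (fun a => seqc (L a) H) (fun b => seqc (R b) H)
      else
        PGame.mk α H.RightMoves (fun a => seqc (L a) H) H.moveRight
    else
      if Nonempty β then
        PGame.mk H.LeftMoves β H.moveLeft (fun b => seqc (R b) H)
      else H

/-- A pregame is dicotic (all-small) if in every subposition,
Left has an option iff Right has an option. -/
def Dicotic : PGame → Prop
  | PGame.mk α β L R =>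
    (Nonempty α ↔ Nonempty β) ∧ (∀ a, Dicotic (L a)) ∧ (∀ b, Dicotic (R b))

/-- The canonical nonnegative integer game `{n-1 | }`. -/
def intGame : ℕ → PGame
  | 0 => 0
  | n + 1 => PGame.mk PUnit PEmpty (fun _ => intGame n) PEmpty.elim

/-- `upSum k` is the disjunctive sum `↑¹ + ↑² + ⋯ + ↑ᵏ`. -/
def upSum : ℕ → PGame
  | 0 => 0
  | k + 1 => upSum k +
      PGame.mk PUnit PUnit (fun _ => 0) (fun _ => PGame.star - upSum k)

/-- `upPow k` is the game `↑^(k+1) = {0 | ∗ - (↑¹ + ⋯ + ↑ᵏ)}`. -/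
def upPow (k : ℕ) : PGame :=
  PGame.mk PUnit PUnit (fun _ => 0) (fun _ => PGame.star - upSum k)

/-- Sequential compound of a list of games. -/
noncomputable def seqList : List PGame → PGame
  | [] => 0
  | G :: l => seqc G (seqList l)

end SeqCompound

/-!
Induction on `G`, with `H` fixed. Negation exchanges Left and Right, so `G` has Left options
exactly when `-G` has Right options; each of the four cases in the definition of `G → H`
is therefore sent by negation to the mirror-image case of `(-G) → (-H)`.
-/

namespace SetTheory.PGame

theorem neg_mk (α β : Type u) (L : α → PGame) (R : β → PGame) :
    -mk α β L R = mk β α (fun j => -R j) (fun i => -L i) :=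
  rfl

theorem Identical.mk_congr {α β : Type u} {L L' : α → PGame} {R R' : β → PGame}
    (hL : ∀ i, L i ≡ L' i) (hR : ∀ j, R j ≡ R' j) : mk α β L R ≡ mk α β L' R' := by
  rw [Identical]
  exact ⟨⟨fun i => ⟨i, hL i⟩, fun i => ⟨i, hL i⟩⟩, ⟨fun j => ⟨j, hR j⟩, fun j => ⟨j, hR j⟩⟩⟩

theorem Identical.refl (x : PGame) : x ≡ x := by
  induction x with
  | mk _ _ _ _ ihL ihR => exact .mk_congr ihL ihR

end SetTheory.PGame

open SeqCompound in
theorem neg_seqc_general (G H : PGame) :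
    -(seqc G H) ≡ seqc (-G) (-H) := by
  obtain ⟨γ, δ, P, Q⟩ := H
  induction G with
  | mk α β L R ihL ihR =>
    simp only [PGame.neg_mk]
    rw [seqc, seqc]
    by_cases hα : Nonempty α <;> by_cases hβ : Nonempty β <;> simp only [hα, hβ, if_true, if_false]
    · exact .mk_congr ihR ihL
    · exact .mk_congr (fun _ => .refl _) ihL
    · exact .mk_congr ihR (fun _ => .refl _)
    · exact .refl _

open SeqCompound in
/-- negation distributes over the sequential compound. -/
theorem neg_seqc (G H : PGame) [PGame.Short G] [PGame.Short H] :
    -(seqc G H) ≡ seqc (-G) (-H) :=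
  neg_seqc_general G H
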